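/- arXiv:2311.06704 — 7 statements merged into one kernel-verified Lean document; each statement's English description precedes it below -/
import Mathlib

section
/- For every natural number n and every real number z > 1/4, the G-polynomial satisfies G_n(z) = (2·z^{(n+1)/2} / √(4z−1)) · sin((n+1) · arccos(1/(2√z))), where z^{(n+1)/2} means (√z)^{n+1}. -/
/-- The G-polynomials: `G 0 z = 1`, `G 1 z = 1`, `G (n+2) z = G (n+1) z - z * G n z`. -/
noncomputable def G : ℕ → ℝ → ℝ
  | 0, _ => 1
  | 1, _ => 1
  | (n + 2), z => G (n + 1) z - z * G n z

/-!
Substituting `z = s²` and `G n z = sⁿ uₙ` turns the recurrence into `u_{n+2} = u_{n+1}/s - u_n`,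
which is the Chebyshev recurrence of the second kind at `c = 1/(2s)`. For `z > 1/4` this point is
`cos θ` with `θ = arccos (1/(2√z))`, and `U_n(cos θ) sin θ = sin((n+1)θ)` gives the formula.
-/

open Polynomial Polynomial.Chebyshev Real

theorem G_sq_eq_pow_mul_eval_U {s c : ℝ} (hsc : 2 * c * s = 1) (n : ℕ) :
    G n (s ^ 2) = s ^ n * (U ℝ n).eval c := by
  induction n using Nat.twoStepInduction with
  | zero => simp [G]
  | one => simp only [G, U_one, Nat.cast_one, eval_mul, eval_X, eval_ofNat]; linarith
  | more n ih₀ ih₁ =>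
    have hU : (U ℝ ((n + 2 : ℕ) : ℤ)).eval c
        = 2 * c * (U ℝ ((n + 1 : ℕ) : ℤ)).eval c - (U ℝ (n : ℤ)).eval c := by
      push_cast
      simp only [U_add_two, eval_sub, eval_mul, eval_X, eval_ofNat]
    rw [G, ih₀, ih₁, hU]
    linear_combination (-s ^ (n + 1) * (U ℝ ((n + 1 : ℕ) : ℤ)).eval c) * hsc

theorem cos_arccos_inv_two_mul_sqrt {z : ℝ} (hz : 1 / 4 < z) :
    cos (arccos (1 / (2 * √z))) = 1 / (2 * √z) := by
  have hs : 1 / 2 < √z := (lt_sqrt (by norm_num)).2 (by linarith)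
  have hpos : 0 < 1 / (2 * √z) := by positivity
  exact cos_arccos (by linarith) ((div_le_one (by linarith)).2 (by linarith))

theorem sin_arccos_inv_two_mul_sqrt {z : ℝ} (hz : 1 / 4 < z) :
    sin (arccos (1 / (2 * √z))) = √(4 * z - 1) / (2 * √z) := by
  have hz₀ : 0 < z := by linarith
  have hs : 0 < √z := sqrt_pos.2 hz₀
  rw [sin_arccos, show (1 : ℝ) - (1 / (2 * √z)) ^ 2 = (4 * z - 1) / (2 * √z) ^ 2 by
      field_simp; rw [sq_sqrt hz₀.le]; ring,
    sqrt_div (by linarith), sqrt_sq (by positivity)]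

theorem stmt_2 (n : ℕ) (z : ℝ) (hz : 1 / 4 < z) :
    G n z = 2 * (Real.sqrt z) ^ (n + 1) / Real.sqrt (4 * z - 1) *
      Real.sin ((n + 1) * Real.arccos (1 / (2 * Real.sqrt z))) := by
  set θ := arccos (1 / (2 * √z))
  have hs : 0 < √z := sqrt_pos.2 (by linarith)
  have hw : 0 < √(4 * z - 1) := sqrt_pos.2 (by linarith)
  have hcos := cos_arccos_inv_two_mul_sqrt hz
  have hsin := sin_arccos_inv_two_mul_sqrt hz
  have hG : G n z = √z ^ n * (U ℝ n).eval (cos θ) := by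
    rw [← G_sq_eq_pow_mul_eval_U (by rw [hcos]; field_simp), sq_sqrt (by linarith)]
  have hUsin := U_real_cos θ (n : ℤ)
  rw [hsin] at hUsin
  push_cast at hUsin
  rw [hG, ← hUsin]
  field_simp
  ring
end

section
/- For every natural number n, the function v(z) = G_n(z) satisfies the second-order ordinary differential equation (4z² − z)·v''(z) + (n − (4n − 6)z)·v'(z) + n(n − 1)·v(z) = 0 for all real z, where v' and v'' denote the first and second derivatives of z ↦ G_n(z). -/
/-- The polynomial form of `G n`. -/
noncomputable def Gpoly (n : ℕ) : Polynomial ℝ :=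
  ∑ k ∈ Finset.range (n+1), Polynomial.monomial k ((-1:ℝ)^k * ((n-k).choose k))

lemma coeff_Gpoly (n k : ℕ) : (Gpoly n).coeff k = (-1:ℝ)^k * ((n-k).choose k) := by
  rw [Gpoly, Polynomial.finset_sum_coeff]
  rcases le_or_gt k n with h | h
  · rw [Finset.sum_eq_single k]
    · simp
    · intro b _ hb
      simp [Polynomial.coeff_monomial, hb]
    · intro hk; exact absurd (Finset.mem_range.mpr (by omega)) hk
  · have hz : ∀ b ∈ Finset.range (n+1),
        (Polynomial.monomial b ((-1:ℝ)^b * ((n-b).choose b))).coeff k = 0 := by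
      intro b hb
      have hb' : b ≠ k := by simp at hb; omega
      simp [Polynomial.coeff_monomial, hb']
    rw [Finset.sum_eq_zero hz]
    have : (n - k).choose k = 0 := Nat.choose_eq_zero_of_lt (by omega)
    simp [this]

lemma Gpascal (n k : ℕ) : (n+1-k).choose (k+1) = (n-k).choose (k+1) + (n-k).choose k := by
  rcases le_or_gt k n with h | h
  · have : n + 1 - k = (n - k) + 1 := by omega
    rw [this, Nat.choose_succ_succ']
    omega
  · have h2 : n - k = 0 := by omega
    rw [h2, Nat.choose_eq_zero_of_lt (by omega), Nat.choose_eq_zero_of_lt (by omega),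
      Nat.choose_eq_zero_of_lt (by omega)]

lemma Gpoly_rec (n : ℕ) : Gpoly (n+2) = Gpoly (n+1) - Polynomial.X * Gpoly n := by
  ext k
  rcases k with _ | k
  · simp [coeff_Gpoly, Polynomial.mul_coeff_zero]
  · rw [Polynomial.coeff_sub, Polynomial.coeff_X_mul, coeff_Gpoly, coeff_Gpoly, coeff_Gpoly]
    have h1 : n + 2 - (k+1) = n + 1 - k := by omega
    have h2 : n + 1 - (k+1) = n - k := by omega
    rw [h1, h2, Gpascal n k]
    push_cast
    ring

lemma G_eq (n : ℕ) (z : ℝ) : G n z = (Gpoly n).eval z := by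
  induction n using Nat.strong_induction_on with
  | _ n ih =>
    match n with
    | 0 => simp [G, Gpoly]
    | 1 =>
      simp only [G, Gpoly]
      norm_num [Finset.sum_range_succ]
    | (m+2) =>
      rw [G, ih (m+1) (by omega), ih m (by omega), Gpoly_rec]
      simp [mul_comm]

lemma GkeyNat (m k : ℕ) : (k+1)*(m+1)*(m.choose (k+1)) = (m+1-k)*(m-k)*((m+1).choose k) := by
  have h1 := Nat.choose_succ_right_eq m k
  have h2 := Nat.choose_mul_succ_eq m k
  nlinarith [h1, h2, Nat.sub_le m k, Nat.sub_le (m+1) k]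

lemma GkeyR (n k : ℕ) :
    ((k:ℝ)+1)*((n:ℝ)-k)*(((n-1-k).choose (k+1) : ℕ) : ℝ)
      = ((n:ℝ)-2*k)*((n:ℝ)-2*k-1)*(((n-k).choose k : ℕ) : ℝ) := by
  rcases le_or_gt (2*k+1) n with h | h
  · obtain ⟨m, hm⟩ : ∃ m, n = m + 1 + k := ⟨n - 1 - k, by omega⟩
    have hkm : k ≤ m := by omega
    subst hm
    have h1 : m + 1 + k - 1 - k = m := by omega
    have h2 : m + 1 + k - k = m + 1 := by omega
    rw [h1, h2]
    have hk := GkeyNat m k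
    have e1 : ((m+1-k : ℕ) : ℝ) = (m:ℝ)+1-k := by push_cast [Nat.cast_sub (by omega : k ≤ m+1)]; ring
    have e2 : ((m-k : ℕ) : ℝ) = (m:ℝ)-k := by push_cast [Nat.cast_sub hkm]; ring
    have hk' := congrArg (fun x : ℕ => (x : ℝ)) hk
    push_cast [e1, e2] at hk'
    push_cast
    nlinarith [hk']
  · rcases eq_or_lt_of_le (by omega : n ≤ 2*k) with h2 | h2
    · have hz : (n-1-k).choose (k+1) = 0 := Nat.choose_eq_zero_of_lt (by omega)
      have hz2 : (n:ℝ) - 2*k = 0 := by rw [h2]; push_cast; ring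
      rw [hz, hz2]; simp
    · have hz : (n-1-k).choose (k+1) = 0 := Nat.choose_eq_zero_of_lt (by omega)
      have hz2 : (n-k).choose k = 0 := Nat.choose_eq_zero_of_lt (by omega)
      rw [hz, hz2]; simp

open Polynomial in
lemma Gode (n : ℕ) :
    ((Gpoly n).derivative.derivative * C (4:ℝ)) * X^2 - (Gpoly n).derivative.derivative * X^1
      + (Gpoly n).derivative * C (n:ℝ) - ((Gpoly n).derivative * C (4*(n:ℝ)-6)) * X^1
      + Gpoly n * C ((n:ℝ)*((n:ℝ)-1)) = 0 := by
  ext k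
  rcases k with _ | _ | k
  · simp only [Polynomial.coeff_sub, Polynomial.coeff_add, Polynomial.coeff_mul_X_pow',
      Polynomial.coeff_mul_C, Polynomial.coeff_derivative, coeff_Gpoly, Polynomial.coeff_zero]
    norm_num
    rcases n with _ | m
    · norm_num
    · rw [Nat.succ_sub_one]
      push_cast
      ring
  · have h := GkeyR n 1
    have e1 : n - 1 - 1 = n - 2 := by omega
    rw [e1] at h
    simp only [Polynomial.coeff_sub, Polynomial.coeff_add, Polynomial.coeff_mul_X_pow',
      Polynomial.coeff_mul_C, Polynomial.coeff_derivative, coeff_Gpoly, Polynomial.coeff_zero]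
    norm_num at h ⊢
    linear_combination h
  · have h := GkeyR n (k+2)
    have e1 : n - 1 - (k+2) = n - (k+3) := by omega
    rw [e1] at h
    simp only [Polynomial.coeff_sub, Polynomial.coeff_add, Polynomial.coeff_mul_X_pow',
      Polynomial.coeff_mul_C, Polynomial.coeff_derivative, coeff_Gpoly, Polynomial.coeff_zero]
    norm_num at h ⊢
    push_cast at h ⊢
    ring_nf at h ⊢
    linear_combination (-(-1:ℝ)^k) * h

theorem stmt_5 (n : ℕ) (z : ℝ) :
    (4 * z ^ 2 - z) * deriv (deriv (fun w => G n w)) z +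
      ((n : ℝ) - (4 * (n : ℝ) - 6) * z) * deriv (fun w => G n w) z +
      (n : ℝ) * ((n : ℝ) - 1) * G n z = 0 := by
  have hf : (fun w => G n w) = fun w => (Gpoly n).eval w := funext (G_eq n)
  rw [hf]
  have h1 : deriv (fun w => (Gpoly n).eval w) = fun x => ((Gpoly n).derivative).eval x :=
    funext fun x => Polynomial.deriv _
  rw [h1]
  have h2 : deriv (fun x => ((Gpoly n).derivative).eval x)
      = fun x => ((Gpoly n).derivative.derivative).eval x :=
    funext fun x => Polynomial.deriv _
  rw [h2]
  have h := congrArg (Polynomial.eval z) (Gode n)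
  simp only [Polynomial.eval_add, Polynomial.eval_sub, Polynomial.eval_mul, Polynomial.eval_pow,
    Polynomial.eval_C, Polynomial.eval_X, Polynomial.eval_zero] at h
  rw [G_eq]
  linear_combination h
end

section
/- For every real number z > 1/4 and every real number t, the series ∑_{n=0}^∞ g_n(z)·t^n/n! converges and its sum equals e^{t/(2√z)} · ( cos( t·√(4z−1)/(2√z) ) + (1/√(4z−1))·sin( t·√(4z−1)/(2√z) ) ). -/
/-- The irrational functions `g n z = G n z / (√z)^n`. -/
noncomputable def g (n : ℕ) (z : ℝ) : ℝ := G n z / (Real.sqrt z) ^ n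

/-!
For `z > 1/4` the recurrence `g (n + 2) = g (n + 1) / √z - g n` has the complex-conjugate
characteristic roots `c, c̄ = (1 ± i√(4z - 1)) / (2√z)`, so Binet's formula reads
`g n = 2 Re (a cⁿ)` with `a = (1 - i / √(4z - 1)) / 2` fixed by `g 0 = 1`, `g 1 = 1 / √z`.
The exponential generating function is then `2 Re (a e^{tc})`, and expanding
`e^{tc} = e^{t/(2√z)} (cos θ + i sin θ)`, `θ = t√(4z - 1) / (2√z)`, gives the closed form.
-/

open Complex

lemma G_add_two (n : ℕ) (z : ℝ) : G (n + 2) z = G (n + 1) z - z * G n z := rfl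

lemma g_add_two {z : ℝ} (hz : 0 < z) (n : ℕ) : g (n + 2) z = g (n + 1) z / √z - g n z := by
  have hsz : √z ≠ 0 := (Real.sqrt_pos.mpr hz).ne'
  have hsz2 : √z ^ 2 = z := Real.sq_sqrt hz.le
  simp only [g, G_add_two]
  field_simp
  linear_combination G n z * √z ^ (2 * n + 2) * hsz2

lemma re_mul_pow_add_two {a c : ℂ} {p q : ℝ} (hc : c ^ 2 = p * c - q) (n : ℕ) :
    (a * c ^ (n + 2)).re = p * (a * c ^ (n + 1)).re - q * (a * c ^ n).re := by
  have h : a * c ^ (n + 2) = p * (a * c ^ (n + 1)) - q * (a * c ^ n) := by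
    linear_combination a * c ^ n * hc
  rw [h, sub_re, re_ofReal_mul, re_ofReal_mul]

lemma hasSum_two_mul_re_mul_pow_mul_pow_div_factorial (a c : ℂ) (t : ℝ) :
    HasSum (fun n : ℕ => 2 * (a * c ^ n).re * t ^ n / n.factorial)
      (2 * (a * exp (t * c)).re) := by
  have h :=
    (hasSum_re ((NormedSpace.expSeries_div_hasSum_exp ((t : ℂ) * c)).mul_left a)).mul_left 2
  rw [← exp_eq_exp_ℂ] at h
  refine h.congr_fun fun n => ?_
  have hterm :
      a * ((t * c) ^ n / n.factorial) = ((t ^ n / n.factorial : ℝ) : ℂ) * (a * c ^ n) := by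
    push_cast; ring
  rw [hterm, re_ofReal_mul]
  ring

noncomputable def charRoot (z : ℝ) : ℂ := ⟨1 / (2 * √z), √(4 * z - 1) / (2 * √z)⟩

noncomputable def binetCoeff (z : ℝ) : ℂ := ⟨1 / 2, -1 / (2 * √(4 * z - 1))⟩

lemma charRoot_sq {z : ℝ} (hz : 1 / 4 < z) :
    charRoot z ^ 2 = ((1 / √z : ℝ) : ℂ) * charRoot z - (1 : ℝ) := by
  have hsz : √z ≠ 0 := (Real.sqrt_pos.mpr (by linarith)).ne'
  have hsz2 : √z ^ 2 = z := Real.sq_sqrt (by linarith)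
  have hw2 : √(4 * z - 1) ^ 2 = 4 * z - 1 := Real.sq_sqrt (by linarith)
  apply Complex.ext <;>
    simp only [charRoot, sq, mul_re, mul_im, sub_re, sub_im, ofReal_re, ofReal_im] <;> field_simp
  · linear_combination 4 * hsz2 - hw2
  · ring

lemma g_eq_two_mul_re {z : ℝ} (hz : 1 / 4 < z) (n : ℕ) :
    g n z = 2 * (binetCoeff z * charRoot z ^ n).re := by
  induction n using Nat.twoStepInduction with
  | zero => simp [g, G, binetCoeff]
  | one =>
    have hw : √(4 * z - 1) ≠ 0 := (Real.sqrt_pos.mpr (by linarith)).ne'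
    simp only [g, G, pow_one, binetCoeff, charRoot, mul_re]
    field_simp
    ring
  | more n ih₁ ih₂ =>
    rw [g_add_two (by linarith), ih₁, ih₂, re_mul_pow_add_two (charRoot_sq hz)]
    ring

lemma two_mul_re_binetCoeff_mul_exp (z t : ℝ) :
    2 * (binetCoeff z * exp (t * charRoot z)).re =
      Real.exp (t / (2 * √z)) * (Real.cos (t * √(4 * z - 1) / (2 * √z)) +
        1 / √(4 * z - 1) * Real.sin (t * √(4 * z - 1) / (2 * √z))) := by
  simp only [binetCoeff, charRoot, mul_re, mul_im, exp_re, exp_im, ofReal_re, ofReal_im]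
  ring_nf

theorem stmt_10 (z t : ℝ) (hz : 1 / 4 < z) :
    HasSum (fun n : ℕ => g n z * t ^ n / (Nat.factorial n))
      (Real.exp (t / (2 * Real.sqrt z)) *
        (Real.cos (t * Real.sqrt (4 * z - 1) / (2 * Real.sqrt z)) +
          (1 / Real.sqrt (4 * z - 1)) *
            Real.sin (t * Real.sqrt (4 * z - 1) / (2 * Real.sqrt z)))) := by
  simp_rw [g_eq_two_mul_re hz, ← two_mul_re_binetCoeff_mul_exp]
  exact hasSum_two_mul_re_mul_pow_mul_pow_div_factorial _ _ t
end

section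
/- For every natural number n, the derivative of the function z ↦ g_n(z) at the point z = 1/4 equals −(2/3)·n·(n+1)·(n+2). -/
/-!
At `z = 1/4` the characteristic roots of the recurrence collide at `1/2`, so `G n (1/4) = (n+1)/2^n`,
and differentiating the recurrence gives `G_n'(1/4) = -(2/3)(n-1)n(n+1)/2^n` by induction.
Since `√(1/4) = 1/2` and `d/dz (√z)^n = n (√z)^n / (2z)`, the quotient rule yields
`g_n'(1/4) = -(2/3)(n-1)n(n+1) - 2n(n+1) = -(2/3)n(n+1)(n+2)`.
-/

open Real

theorem G_one_quarter : ∀ n : ℕ, G n (1 / 4) = (n + 1) / 2 ^ n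
  | 0 => by simp [G]
  | 1 => by norm_num [G]
  | n + 2 => by
    rw [G, G_one_quarter (n + 1), G_one_quarter n]
    push_cast
    field_simp
    ring

theorem hasDerivAt_G_add_two {n : ℕ} {z a b : ℝ} (ha : HasDerivAt (G (n + 1)) a z)
    (hb : HasDerivAt (G n) b z) : HasDerivAt (G (n + 2)) (a - (G n z + z * b)) z :=
  (ha.sub ((hasDerivAt_id' z).mul hb)).congr_deriv (by rw [one_mul])

theorem hasDerivAt_G_one_quarter :
    ∀ n : ℕ, HasDerivAt (G n) (-(2 / 3) * n * (n ^ 2 - 1) / 2 ^ n) (1 / 4)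
  | 0 => by simpa [G] using hasDerivAt_const (1 / 4 : ℝ) (1 : ℝ)
  | 1 => by simpa [G] using hasDerivAt_const (1 / 4 : ℝ) (1 : ℝ)
  | n + 2 => by
    convert hasDerivAt_G_add_two (hasDerivAt_G_one_quarter (n + 1)) (hasDerivAt_G_one_quarter n)
      using 1
    rw [G_one_quarter]
    push_cast
    field_simp
    ring

theorem hasDerivAt_sqrt_pow (n : ℕ) {z : ℝ} (hz : 0 < z) :
    HasDerivAt (fun x => √x ^ n) (n * √z ^ n / (2 * z)) z := by
  refine ((hasDerivAt_sqrt hz.ne').fun_pow n).congr_deriv ?_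
  rcases n with _ | m
  · simp
  · have hs : 0 < √z := sqrt_pos.mpr hz
    rw [Nat.add_sub_cancel]
    field_simp
    linear_combination -√z ^ m * sq_sqrt hz.le

theorem hasDerivAt_g {n : ℕ} {z G' : ℝ} (hz : 0 < z) (hG : HasDerivAt (G n) G' z) :
    HasDerivAt (g n) ((G' - n * G n z / (2 * z)) / √z ^ n) z := by
  have hs : √z ^ n ≠ 0 := pow_ne_zero n (sqrt_pos.mpr hz).ne'
  refine (hG.fun_div (hasDerivAt_sqrt_pow n hz) hs).congr_deriv ?_
  field_simp

theorem stmt_12 (n : ℕ) :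
    HasDerivAt (g n) (-(2 / 3) * n * (n + 1) * (n + 2)) (1 / 4) := by
  convert hasDerivAt_g (by norm_num) (hasDerivAt_G_one_quarter n) using 1
  have hsqrt : √(1 / 4 : ℝ) = 1 / 2 := by
    rw [show (1 / 4 : ℝ) = (1 / 2) ^ 2 by norm_num, sqrt_sq (by norm_num)]
  rw [G_one_quarter, hsqrt, one_div_pow]
  field_simp
  ring
end

section
/- The improper integral ∫_{1/4}^{+∞} √(4z−1)/(2π z²) dz equals 1, i.e. the measure μ on [1/4, +∞) with density w(z) = √(4z−1)/(2π z²) with respect to Lebesgue measure is a probability measure. -/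
/-! The weight has the elementary primitive
`F z = (4 arctan √(4z-1) - √(4z-1)/z) / (2π)`, which vanishes at `1/4` and tends to
`(4 · π/2 - 0) / (2π) = 1` at infinity. Since the weight is nonnegative, this limit also gives
its integrability, and the integral is `1 - F (1/4) = 1`. -/

open MeasureTheory Topology Filter Real

noncomputable def weightPrimitive (z : ℝ) : ℝ :=
  (4 * arctan √(4 * z - 1) - √(4 * z - 1) / z) / (2 * π)

lemma hasDerivAt_weightPrimitive {z : ℝ} (hz : 1 / 4 < z) :
    HasDerivAt weightPrimitive (√(4 * z - 1) / (2 * π * z ^ 2)) z := by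
  have hz₀ : 0 < z := by linarith
  have hlin : 0 < 4 * z - 1 := by linarith
  have hsq : √(4 * z - 1) ^ 2 = 4 * z - 1 := sq_sqrt hlin.le
  have hsqrt : HasDerivAt (fun z ↦ √(4 * z - 1)) (4 / (2 * √(4 * z - 1))) z := by
    simpa [one_div, div_eq_inv_mul] using
      (((hasDerivAt_id z).const_mul 4).sub_const 1).sqrt hlin.ne'
  have h : HasDerivAt weightPrimitive _ z :=
    ((hsqrt.arctan.const_mul 4).sub (hsqrt.div (hasDerivAt_id' z) hz₀.ne')).div_const (2 * π)
  refine h.congr_deriv ?_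
  field_simp
  rw [hsq]
  ring

lemma continuousAt_weightPrimitive {z : ℝ} (hz : z ≠ 0) : ContinuousAt weightPrimitive z := by
  unfold weightPrimitive
  fun_prop (disch := assumption)

lemma tendsto_sqrt_linear_div_atTop (a b : ℝ) :
    Tendsto (fun z ↦ √(a * z - b) / z) atTop (𝓝 0) := by
  have hin : Tendsto (fun z : ℝ ↦ a / z - b / z ^ 2) atTop (𝓝 0) := by
    simpa using ((tendsto_const_nhds (x := a)).div_atTop tendsto_id).sub
      ((tendsto_const_nhds (x := b)).div_atTop (tendsto_pow_atTop two_ne_zero))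
  have hsqrt : Tendsto (fun z : ℝ ↦ √(a / z - b / z ^ 2)) atTop (𝓝 0) :=
    sqrt_zero ▸ (continuous_sqrt.tendsto 0).comp hin
  refine hsqrt.congr' ?_
  filter_upwards [eventually_gt_atTop 0] with z hz
  have : a / z - b / z ^ 2 = (a * z - b) / z ^ 2 := by field_simp
  rw [this, sqrt_div' _ (sq_nonneg z), sqrt_sq hz.le]

lemma tendsto_weightPrimitive_atTop : Tendsto weightPrimitive atTop (𝓝 1) := by
  have harctan : Tendsto (fun z ↦ arctan √(4 * z - 1)) atTop (𝓝 (π / 2)) :=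
    (tendsto_arctan_atTop.mono_right nhdsWithin_le_nhds).comp <| tendsto_sqrt_atTop.comp <|
      tendsto_atTop_add_const_right _ _ (tendsto_id.const_mul_atTop four_pos)
  have hlim : Tendsto weightPrimitive atTop (𝓝 ((4 * (π / 2) - 0) / (2 * π))) :=
    ((harctan.const_mul 4).sub (tendsto_sqrt_linear_div_atTop 4 1)).div_const (2 * π)
  convert hlim using 2
  field_simp
  ring

theorem stmt_15 :
    ∫ z in Set.Ioi (1 / 4 : ℝ), Real.sqrt (4 * z - 1) / (2 * Real.pi * z ^ 2) = 1 := by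
  have hcont : ContinuousWithinAt weightPrimitive (Set.Ici (1 / 4)) (1 / 4) :=
    (continuousAt_weightPrimitive (by norm_num)).continuousWithinAt
  have hnonneg : ∀ z ∈ Set.Ioi (1 / 4 : ℝ), 0 ≤ √(4 * z - 1) / (2 * π * z ^ 2) :=
    fun z _ ↦ by positivity
  rw [integral_Ioi_of_hasDerivAt_of_nonneg hcont (fun z hz ↦ hasDerivAt_weightPrimitive hz)
    hnonneg tendsto_weightPrimitive_atTop]
  norm_num [weightPrimitive]
end

section
/- For all natural numbers m and n, ∫_{1/4}^{+∞} g_{2m}(z)·g_{2n}(z)·(√(4z−1)/(2π z²)) dz = 1 if m = n and 0 otherwise; that is, the family {g_{2n} : n ∈ ℕ} is orthonormal in L² of the measure with density √(4z−1)/(2π z²) on [1/4, +∞). -/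
open MeasureTheory

/-!
Under the substitution `z = 1 / (4 cos² θ)`, `θ ∈ (0, π/2)`, the recurrence for `G` becomes the
Chebyshev recurrence, so `g k z = U_k (cos θ) = sin ((k + 1) θ) / sin θ`. The weight times the
Jacobian `sin θ / (2 cos³ θ)` is `(4 / π) sin² θ`, so the integral equals
`(4 / π) ∫₀^{π/2} sin ((2m + 1) θ) sin ((2n + 1) θ) dθ`, which is `δ_{mn}` because
`2 (m - n)` and `2 (m + n + 1)` are even frequencies.
-/

open Real Set Polynomial Polynomial.Chebyshev

lemma two_mul_pow_mul_G_one_div_four_mul_sq {x : ℝ} (hx : x ≠ 0) (k : ℕ) :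
    (2 * x) ^ k * G k (1 / (4 * x ^ 2)) = (U ℝ k).eval x := by
  induction k using Nat.twoStepInduction with
  | zero => simp [G]
  | one => simp [G]
  | more k ih₀ ih₁ =>
    have hU : U ℝ ((k + 2 : ℕ) : ℤ) = 2 * X * U ℝ ((k + 1 : ℕ) : ℤ) - U ℝ k := by
      push_cast; exact U_add_two ℝ k
    rw [hU, G, eval_sub, eval_mul, ← ih₀, ← ih₁]
    simp only [eval_mul, eval_ofNat, eval_X]
    field_simp
    ring

lemma g_one_div_four_mul_sq {x : ℝ} (hx : 0 < x) (k : ℕ) :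
    g k (1 / (4 * x ^ 2)) = (U ℝ k).eval x := by
  have hsqrt : √(1 / (4 * x ^ 2)) = (2 * x)⁻¹ := by
    rw [one_div, sqrt_inv, show 4 * x ^ 2 = (2 * x) ^ 2 by ring, sqrt_sq (by positivity)]
  rw [g, hsqrt, inv_pow, div_inv_eq_mul, mul_comm,
    two_mul_pow_mul_G_one_div_four_mul_sq hx.ne']

lemma g_one_div_four_mul_cos_sq_mul_sin {θ : ℝ} (hθ : 0 < cos θ) (k : ℕ) :
    g k (1 / (4 * cos θ ^ 2)) * sin θ = sin ((k + 1) * θ) := by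
  rw [g_one_div_four_mul_sq hθ, U_real_cos]
  norm_cast

lemma integral_cos_two_mul_int_mul (k : ℤ) :
    ∫ θ in (0 : ℝ)..π / 2, cos (2 * k * θ) = if k = 0 then π / 2 else 0 := by
  split_ifs with hk
  · simp [hk]
  · have hk' : (2 * k : ℝ) ≠ 0 := by exact_mod_cast mul_ne_zero two_ne_zero hk
    rw [intervalIntegral.integral_comp_mul_left (fun θ => cos θ) hk', integral_cos,
      show 2 * (k : ℝ) * (π / 2) = k * π by ring, sin_int_mul_pi]
    simp

lemma integral_sin_odd_mul_mul_sin_odd_mul (m n : ℕ) :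
    ∫ θ in (0 : ℝ)..π / 2, sin ((2 * m + 1) * θ) * sin ((2 * n + 1) * θ) =
      if m = n then π / 4 else 0 := by
  have hprod : ∀ θ : ℝ, sin ((2 * m + 1) * θ) * sin ((2 * n + 1) * θ) =
      (cos (2 * ((m - n : ℤ) : ℝ) * θ) - cos (2 * ((m + n + 1 : ℤ) : ℝ) * θ)) / 2 := by
    intro θ
    push_cast
    rw [show 2 * ((m : ℝ) - n) * θ = (2 * m + 1) * θ - (2 * n + 1) * θ by ring,
      show 2 * ((m : ℝ) + n + 1) * θ = (2 * m + 1) * θ + (2 * n + 1) * θ by ring,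
      cos_sub, cos_add]
    ring
  simp_rw [hprod]
  have hint : ∀ k : ℤ, IntervalIntegrable (fun θ => cos (2 * k * θ)) volume 0 (π / 2) :=
    fun k => by apply Continuous.intervalIntegrable; fun_prop
  rw [intervalIntegral.integral_div, intervalIntegral.integral_sub (hint _) (hint _),
    integral_cos_two_mul_int_mul, integral_cos_two_mul_int_mul,
    if_neg (show (m + n + 1 : ℤ) ≠ 0 by omega)]
  split_ifs <;> first | omega | ring

lemma cos_pos_of_mem_Ioo_zero_pi_div_two {θ : ℝ} (hθ : θ ∈ Ioo 0 (π / 2)) : 0 < cos θ :=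
  cos_pos_of_mem_Ioo ⟨by linarith [hθ.1, pi_pos], hθ.2⟩

lemma sin_pos_of_mem_Ioo_zero_pi_div_two {θ : ℝ} (hθ : θ ∈ Ioo 0 (π / 2)) : 0 < sin θ :=
  sin_pos_of_pos_of_lt_pi hθ.1 (by linarith [hθ.2, pi_pos])

lemma hasDerivAt_one_div_four_mul_cos_sq {θ : ℝ} (hθ : cos θ ≠ 0) :
    HasDerivAt (fun θ => 1 / (4 * cos θ ^ 2)) (sin θ / (2 * cos θ ^ 3)) θ := by
  have h := (((hasDerivAt_cos θ).pow 2).const_mul 4).fun_inv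
    (mul_ne_zero four_ne_zero (pow_ne_zero 2 hθ))
  simp only [one_div]
  refine h.congr_deriv ?_
  simp only [Pi.pow_apply]
  field_simp
  ring

lemma injOn_one_div_four_mul_cos_sq :
    InjOn (fun θ => 1 / (4 * cos θ ^ 2)) (Ioo 0 (π / 2)) := by
  intro a ha b hb hab
  have hcos : cos a = cos b := by
    simp only [one_div, inv_inj] at hab
    exact (pow_left_inj₀ (cos_pos_of_mem_Ioo_zero_pi_div_two ha).le
      (cos_pos_of_mem_Ioo_zero_pi_div_two hb).le two_ne_zero).mp
      (mul_left_cancel₀ four_ne_zero hab)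
  exact injOn_cos (Ioo_subset_Icc_self.trans (Icc_subset_Icc_right (by linarith [pi_pos])) ha)
    (Ioo_subset_Icc_self.trans (Icc_subset_Icc_right (by linarith [pi_pos])) hb) hcos

lemma image_one_div_four_mul_cos_sq :
    (fun θ => 1 / (4 * cos θ ^ 2)) '' Ioo 0 (π / 2) = Ioi (1 / 4) := by
  ext y
  constructor
  · rintro ⟨θ, hθ, rfl⟩
    have hc := cos_pos_of_mem_Ioo_zero_pi_div_two hθ
    have hs := sin_pos_of_mem_Ioo_zero_pi_div_two hθ
    have hc1 : cos θ ^ 2 < 1 := by nlinarith [sin_sq_add_cos_sq θ]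
    show 1 / 4 < 1 / (4 * cos θ ^ 2)
    gcongr
    linarith
  · intro hy
    have hy : 1 / 4 < y := hy
    have hsqrt : 1 / 2 < √y := by
      rw [lt_sqrt (by norm_num)]
      linarith
    have hx₀ : 0 < 1 / (2 * √y) := by positivity
    have hx₁ : 1 / (2 * √y) < 1 := by
      rw [div_lt_one (by positivity)]
      linarith
    refine ⟨arccos (1 / (2 * √y)), ⟨arccos_pos.mpr hx₁, arccos_lt_pi_div_two.mpr hx₀⟩, ?_⟩
    dsimp only
    rw [cos_arccos (by linarith) hx₁.le, div_pow, mul_pow, sq_sqrt (by linarith)]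
    field_simp
    ring

lemma integral_Ioi_one_div_four_eq (F : ℝ → ℝ) :
    ∫ z in Ioi (1 / 4 : ℝ), F z =
      ∫ θ in Ioo 0 (π / 2), sin θ / (2 * cos θ ^ 3) * F (1 / (4 * cos θ ^ 2)) := by
  rw [← image_one_div_four_mul_cos_sq, integral_image_eq_integral_abs_deriv_smul
    measurableSet_Ioo (fun θ hθ => (hasDerivAt_one_div_four_mul_cos_sq
      (cos_pos_of_mem_Ioo_zero_pi_div_two hθ).ne').hasDerivWithinAt)
    injOn_one_div_four_mul_cos_sq]
  refine setIntegral_congr_fun measurableSet_Ioo fun θ hθ => ?_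
  have := cos_pos_of_mem_Ioo_zero_pi_div_two hθ
  have := sin_pos_of_mem_Ioo_zero_pi_div_two hθ
  rw [smul_eq_mul, abs_of_pos (by positivity)]

lemma jacobian_mul_g_mul_g_mul_weight {θ : ℝ} (hθ : θ ∈ Ioo 0 (π / 2)) (m n : ℕ) :
    sin θ / (2 * cos θ ^ 3) *
        (g (2 * m) (1 / (4 * cos θ ^ 2)) * g (2 * n) (1 / (4 * cos θ ^ 2)) *
          (√(4 * (1 / (4 * cos θ ^ 2)) - 1) / (2 * π * (1 / (4 * cos θ ^ 2)) ^ 2))) =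
      4 / π * (sin ((2 * m + 1) * θ) * sin ((2 * n + 1) * θ)) := by
  have hc := cos_pos_of_mem_Ioo_zero_pi_div_two hθ
  have hs := sin_pos_of_mem_Ioo_zero_pi_div_two hθ
  have hg : ∀ k : ℕ, g (2 * k) (1 / (4 * cos θ ^ 2)) = sin ((2 * k + 1) * θ) / sin θ := by
    intro k
    rw [eq_div_iff hs.ne', g_one_div_four_mul_cos_sq_mul_sin hc]
    push_cast
    rfl
  have hsqrt : √(4 * (1 / (4 * cos θ ^ 2)) - 1) = sin θ / cos θ := by
    rw [← sqrt_sq (div_pos hs hc).le]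
    congr 1
    field_simp
    linear_combination -sin_sq_add_cos_sq θ
  rw [hg, hg, hsqrt]
  field_simp
  ring

theorem stmt_16 (m n : ℕ) :
    ∫ z in Set.Ioi (1 / 4 : ℝ),
        g (2 * m) z * g (2 * n) z * (Real.sqrt (4 * z - 1) / (2 * Real.pi * z ^ 2)) =
      if m = n then 1 else 0 := by
  rw [integral_Ioi_one_div_four_eq, setIntegral_congr_fun measurableSet_Ioo
      fun θ hθ => jacobian_mul_g_mul_g_mul_weight hθ m n,
    integral_const_mul, ← integral_Ioc_eq_integral_Ioo,
    ← intervalIntegral.integral_of_le (by positivity), integral_sin_odd_mul_mul_sin_odd_mul]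
  split_ifs
  · field_simp
  · simp
end

section
/- For every nonzero integer m, the series ∑_{n=0}^∞ m² / ( (2n − 2m + 1)² · (2n + 2m + 1)² ) converges and its sum equals π²/64. -/
/-!
Put `a = 2n - 2k + 1` and `b = 2n + 2k + 1 = a + 4k`. Partial fractions give
`k² / (a² b²) = (a⁻² + b⁻² - (a⁻¹ - b⁻¹) / (2k)) / 16`. As `n` runs over `ℕ`, the numbers `a`
and `-b` together run over all odd integers exactly once, so the squared terms sum to
`∑_{j ∈ ℤ} (2j + 1)⁻² = π² / 4`. Since `b` is `a` shifted by `2k` in `n`, the last term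
telescopes to `∑_{n < 2k} a⁻¹`, which vanishes: these `a` are the odd integers in `(-2k, 2k)`.
-/

open Filter Topology Finset Real

theorem hasSum_sub_nat_add_of_tendsto_zero {G : Type*} [AddCommGroup G] [TopologicalSpace G]
    [IsTopologicalAddGroup G] [T2Space G] {u : ℕ → G} (hu : Tendsto u atTop (𝓝 0)) (k : ℕ)
    (hs : Summable fun n ↦ u n - u (n + k)) :
    HasSum (fun n ↦ u n - u (n + k)) (∑ i ∈ range k, u i) := by
  have partial_sum (N : ℕ) :
      ∑ n ∈ range N, (u n - u (n + k)) = ∑ i ∈ range k, u i - ∑ i ∈ range k, u (N + i) := by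
    have h := sum_range_add u k N
    rw [add_comm k N, sum_range_add u N k] at h
    simp_rw [sum_sub_distrib, add_comm _ k, sub_eq_sub_iff_add_eq_add, h]
  have htail : Tendsto (fun N ↦ ∑ i ∈ range k, u (N + i)) atTop (𝓝 0) := by
    simpa using tendsto_finsetSum (range k) fun i _ ↦ hu.comp (tendsto_add_atTop_nat i)
  have hlim : Tendsto (fun N ↦ ∑ n ∈ range N, (u n - u (n + k))) atTop
      (𝓝 (∑ i ∈ range k, u i)) := by
    simpa [partial_sum] using tendsto_const_nhds.sub htail
  exact tendsto_nhds_unique hs.hasSum.tendsto_sum_nat hlim ▸ hs.hasSum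

theorem hasSum_one_div_odd_sq : HasSum (fun n : ℕ ↦ 1 / (2 * (n : ℝ) + 1) ^ 2) (π ^ 2 / 8) := by
  set f : ℕ → ℝ := fun n ↦ 1 / (n : ℝ) ^ 2
  have heven : HasSum (fun n ↦ f (2 * n)) (π ^ 2 / 24) := by
    have e : (fun n ↦ f (2 * n)) = fun n : ℕ ↦ 1 / 4 * f n := by
      funext n
      simp only [f]
      push_cast
      ring
    rw [e, show π ^ 2 / 24 = 1 / 4 * (π ^ 2 / 6) by ring]
    exact hasSum_zeta_two.mul_left _
  have hodd : Summable fun n ↦ f (2 * n + 1) :=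
    hasSum_zeta_two.summable.comp_injective fun a b h ↦ by omega
  have htotal := (heven.even_add_odd hodd.hasSum).unique hasSum_zeta_two
  rw [show π ^ 2 / 8 = ∑' n, f (2 * n + 1) by linarith]
  refine hodd.hasSum.congr_fun fun n ↦ ?_
  simp only [f]
  push_cast
  rfl

theorem hasSum_int_one_div_odd_sq : HasSum (fun j : ℤ ↦ 1 / (2 * (j : ℝ) + 1) ^ 2) (π ^ 2 / 4) := by
  have hneg : HasSum (fun n : ℕ ↦ 1 / (2 * ((-(n + 1) : ℤ) : ℝ) + 1) ^ 2) (π ^ 2 / 8) := by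
    refine hasSum_one_div_odd_sq.congr_fun fun n ↦ ?_
    push_cast
    ring
  rw [show π ^ 2 / 4 = π ^ 2 / 8 + π ^ 2 / 8 by ring]
  exact hasSum_one_div_odd_sq.of_nat_of_neg_add_one hneg

theorem hasSum_one_div_odd_sq_sub_add (m : ℤ) :
    HasSum (fun n : ℕ ↦ 1 / (2 * (n : ℝ) - 2 * m + 1) ^ 2 + 1 / (2 * (n : ℝ) + 2 * m + 1) ^ 2)
      (π ^ 2 / 4) := by
  refine ((Equiv.subRight m).hasSum_iff.mpr hasSum_int_one_div_odd_sq).nat_add_neg_add_one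
    |>.congr_fun fun n ↦ ?_
  simp only [Function.comp_apply, Equiv.subRight_apply]
  push_cast
  ring

theorem two_mul_intCast_add_one_ne_zero (j : ℤ) : 2 * (j : ℝ) + 1 ≠ 0 := by
  exact_mod_cast (show 2 * j + 1 ≠ 0 by omega)

theorem sum_range_inv_two_mul_sub_add_one (k : ℕ) :
    ∑ i ∈ range (2 * k), (2 * (i : ℝ) - 2 * k + 1)⁻¹ = 0 := by
  set f := fun i : ℕ ↦ (2 * (i : ℝ) - 2 * k + 1)⁻¹
  have hanti : ∀ i ∈ range (2 * k), f (2 * k - 1 - i) = -f i := by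
    intro i hi
    have : ((2 * k - 1 - i : ℕ) : ℝ) = 2 * k - 1 - i := by
      rw [mem_range] at hi
      rw [Nat.cast_sub (by omega), Nat.cast_sub (by omega)]
      push_cast
      ring
    simp only [f, this, ← inv_neg]
    ring_nf
  have := sum_range_reflect f (2 * k)
  rw [sum_congr rfl hanti, sum_neg_distrib] at this
  linarith

theorem abs_inv_sub_inv_le {a b : ℝ} (ha : a ≠ 0) (hb : b ≠ 0) :
    |a⁻¹ - b⁻¹| ≤ |b - a| / 2 * (1 / a ^ 2 + 1 / b ^ 2) := by
  rw [inv_sub_inv' ha hb, abs_mul, abs_mul]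
  have := two_mul_le_add_sq |a⁻¹| |b⁻¹|
  simp only [sq_abs, inv_pow, one_div] at this ⊢
  nlinarith [abs_nonneg (b - a), abs_nonneg a⁻¹, abs_nonneg b⁻¹]

theorem sq_div_sq_mul_sq_eq {a b k : ℝ} (ha : a ≠ 0) (hb : b ≠ 0) (hk : k ≠ 0)
    (hab : b = a + 4 * k) :
    k ^ 2 / (a ^ 2 * b ^ 2) = (1 / a ^ 2 + 1 / b ^ 2 - (a⁻¹ - b⁻¹) / (2 * k)) / 16 := by
  rw [inv_sub_inv' ha hb]
  field_simp
  rw [hab]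
  ring

theorem hasSum_sq_div_sq_mul_sq_of_nat (k : ℕ) (hk : k ≠ 0) :
    HasSum (fun n : ℕ ↦
        (k : ℝ) ^ 2 / ((2 * (n : ℝ) - 2 * k + 1) ^ 2 * (2 * (n : ℝ) + 2 * k + 1) ^ 2))
      (π ^ 2 / 64) := by
  set a : ℕ → ℝ := fun n ↦ 2 * (n : ℝ) - 2 * k + 1
  have ha (n : ℕ) : a n ≠ 0 := by
    convert two_mul_intCast_add_one_ne_zero (n - k) using 1
    push_cast
    ring
  have hgap (n : ℕ) : a (n + 2 * k) = a n + 4 * k := by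
    simp only [a]
    push_cast
    ring
  have hsq : HasSum (fun n ↦ 1 / a n ^ 2 + 1 / a (n + 2 * k) ^ 2) (π ^ 2 / 4) := by
    refine (hasSum_one_div_odd_sq_sub_add k).congr_fun fun n ↦ ?_
    simp only [a]
    push_cast
    ring
  have hsumm : Summable fun n ↦ (a n)⁻¹ - (a (n + 2 * k))⁻¹ := by
    refine Summable.of_norm_bounded (hsq.summable.mul_left (2 * (k : ℝ))) fun n ↦ ?_
    rw [Real.norm_eq_abs]
    refine (abs_inv_sub_inv_le (ha n) (ha (n + 2 * k))).trans_eq ?_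
    rw [hgap, add_sub_cancel_left, abs_of_nonneg (by positivity)]
    ring
  have hlim : Tendsto (fun n ↦ (a n)⁻¹) atTop (𝓝 0) := by
    refine tendsto_inv_atTop_zero.comp <|
      ((tendsto_natCast_atTop_atTop.const_mul_atTop two_pos).atTop_add
        (tendsto_const_nhds (x := 1 - 2 * (k : ℝ)))).congr fun n ↦ ?_
    simp only [a]
    ring
  have htel : HasSum (fun n ↦ (a n)⁻¹ - (a (n + 2 * k))⁻¹) 0 := by
    simpa only [a, sum_range_inv_two_mul_sub_add_one] using
      hasSum_sub_nat_add_of_tendsto_zero hlim (2 * k) hsumm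
  rw [show π ^ 2 / 64 = (π ^ 2 / 4 - 0 / (2 * k)) / 16 by ring]
  refine ((hsq.sub (htel.div_const (2 * k))).div_const 16).congr_fun fun n ↦ ?_
  rw [← sq_div_sq_mul_sq_eq (ha n) (ha (n + 2 * k)) (by positivity) (hgap n)]
  simp only [a]
  push_cast
  ring

theorem stmt_19 (m : ℤ) (hm : m ≠ 0) :
    HasSum (fun n : ℕ =>
        (m : ℝ) ^ 2 / ((2 * (n : ℝ) - 2 * (m : ℝ) + 1) ^ 2 * (2 * (n : ℝ) + 2 * (m : ℝ) + 1) ^ 2))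
      (Real.pi ^ 2 / 64) := by
  obtain ⟨k, rfl | rfl⟩ := m.eq_nat_or_neg
  · exact_mod_cast hasSum_sq_div_sq_mul_sq_of_nat k (by omega)
  · refine (hasSum_sq_div_sq_mul_sq_of_nat k (by omega)).congr_fun fun n ↦ ?_
    push_cast
    ring
end
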